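/- Let A be a residuated lattice, F a filter of A, n ≥ 2, and let m₁, …, mₙ be pairwise distinct F-minimal prime filters of A. Then there exist a₁, …, aₙ ∈ A with aᵢ ∨ aⱼ ∈ F for all i ≠ j and aᵢ ∉ mᵢ for each i. Moreover, setting bᵢ = ⊙_{j ≠ i} aⱼ, one has: (1) bᵢ ∈ mᵢ for each i; (2) b₁ ∨ ⋯ ∨ bₙ ∈ F; (3) (F : ⋁_{j ≠ i} bⱼ) ⊆ mᵢ for each i. -/

import Mathlib

class ResiduatedLattice (α : Type*) extends Lattice α, CommMonoid α, BoundedOrder α where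
  rimp : α → α → α
  one_eq_top : (1 : α) = ⊤
  adjunction : ∀ x y z : α, x * y ≤ z ↔ x ≤ rimp y z

variable {α : Type*} [ResiduatedLattice α]

/-- A filter of a residuated lattice: nonempty, closed under `⊙` and upward closed. -/
def IsFilter (F : Set α) : Prop :=
  F.Nonempty ∧ (∀ x ∈ F, ∀ y ∈ F, x * y ∈ F) ∧ ∀ x ∈ F, ∀ y : α, x ≤ y → y ∈ F

/-- A prime filter: a proper filter such that `x ⊔ y ∈ P` implies `x ∈ P` or `y ∈ P`. -/
def IsPrimeFilter (P : Set α) : Prop :=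
  IsFilter P ∧ P ≠ Set.univ ∧ ∀ x y : α, x ⊔ y ∈ P → x ∈ P ∨ y ∈ P

/-- A `∨`-closed subset: nonempty and closed under join. -/
def IsJoinClosed (C : Set α) : Prop :=
  C.Nonempty ∧ ∀ x ∈ C, ∀ y ∈ C, x ⊔ y ∈ C

/-- The filter generated by a set. -/
def filterGen (X : Set α) : Set α := ⋂₀ {G : Set α | IsFilter G ∧ X ⊆ G}

/-- An `X`-minimal prime filter: prime, contains `X`, minimal among primes containing `X`. -/
def IsMinPrimeOver (X P : Set α) : Prop :=
  IsPrimeFilter P ∧ X ⊆ P ∧ ∀ Q : Set α, IsPrimeFilter Q → X ⊆ Q → Q ⊆ P → Q = P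

/-- `ω_F(X) = {a | x ∨ a ∈ F for some x ∈ X}`. -/
def omegaF (F X : Set α) : Set α := {a : α | ∃ x ∈ X, x ⊔ a ∈ F}

/-- The coannihilator `(F : x) = {a | x ∨ a ∈ F}`. -/
def coann (F : Set α) (x : α) : Set α := {a : α | x ⊔ a ∈ F}

/-- `D_F(H) = {a | x ∨ a ∈ F for some x ∉ H}`, the set of `F`-divisors of `H`. -/
def divisorsF (F H : Set α) : Set α := {a : α | ∃ x ∉ H, x ⊔ a ∈ F}

/-- A lattice ideal: nonempty, closed under join and downward closed. -/
def IsLatticeIdeal (I : Set α) : Prop :=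
  I.Nonempty ∧ (∀ x ∈ I, ∀ y ∈ I, x ⊔ y ∈ I) ∧ ∀ x y : α, x ≤ y → y ∈ I → x ∈ I

/-- The lattice ideal generated by a set. -/
def idealGen (X : Set α) : Set α := ⋂₀ {I : Set α | IsLatticeIdeal I ∧ X ⊆ I}

/-- An `ω_F`-filter: a filter of the form `ω_F(I)` for some lattice ideal `I`. -/
def IsOmegaFilter (F H : Set α) : Prop :=
  IsFilter H ∧ ∃ I : Set α, IsLatticeIdeal I ∧ H = omegaF F I

/-!
Distinct `F`-minimal prime filters `P`, `Q` are incomparable, and every `u ∈ P` has a partner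
`r ∉ P` with `u ⊔ r ∈ F`: otherwise the prime filter theorem gives a prime filter over `F`
avoiding the `∨`-closed set `{c | c ≤ u ⊔ y for some y ∉ P}`, which lies inside `P` yet misses
`u`. Taking `u ∈ mᵢ \ mⱼ` yields, for each ordered pair `i ≠ j`, elements `p ∉ mᵢ`, `q ∉ mⱼ`
with `p ⊔ q ∈ F`, and `aᵢ` is the join of all those elements that avoid `mᵢ`. A prime filter
containing `F` omits at most one `aᵢ`; this gives `bᵢ ∈ mᵢ` and, since `F` is the intersection
of the prime filters containing it, `⋁ bᵢ ∈ F`. Finally every `bⱼ` with `j ≠ i` lies below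
`aᵢ ∉ mᵢ`.
-/

open Finset

namespace ResiduatedLattice

theorem le_one (a : α) : a ≤ 1 := one_eq_top (α := α) ▸ le_top

instance : IsOrderedMonoid α where
  mul_le_mul_left a b hab c :=
    (adjunction a c (b * c)).2 (hab.trans ((adjunction b c (b * c)).1 le_rfl))

theorem mul_le_left (a b : α) : a * b ≤ a := mul_le_of_le_one_right' (le_one b)

theorem mul_le_right (a b : α) : a * b ≤ b := mul_le_of_le_one_left' (le_one a)

theorem prod_le_of_mem {ι : Type*} [DecidableEq ι] {s : Finset ι} {f : ι → α} {i : ι}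
    (hi : i ∈ s) : ∏ j ∈ s, f j ≤ f i := by
  rw [← mul_prod_erase s f hi]
  exact mul_le_left _ _

-- `x ↦ x * a` is a left adjoint, hence preserves joins.
protected theorem mul_sup (a b c : α) : a * (b ⊔ c) = a * b ⊔ a * c := by
  refine le_antisymm ?_ (sup_le (mul_le_mul_right le_sup_left a) (mul_le_mul_right le_sup_right a))
  rw [mul_comm]
  refine (adjunction _ _ _).2 (sup_le ((adjunction _ _ _).1 ?_) ((adjunction _ _ _).1 ?_))
  · rw [mul_comm]; exact le_sup_left
  · rw [mul_comm]; exact le_sup_right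

theorem sup_mul_sup_le (a b c : α) : (a ⊔ b) * (a ⊔ c) ≤ a ⊔ b * c := by
  rw [ResiduatedLattice.mul_sup]
  refine sup_le (le_sup_of_le_left (mul_le_right _ _)) ?_
  rw [mul_comm, ResiduatedLattice.mul_sup, mul_comm c b]
  exact sup_le_sup_right (mul_le_right _ _) _

theorem sup_pow_le (a b : α) : ∀ k : ℕ, (a ⊔ b) ^ k ≤ a ⊔ b ^ k
  | 0 => by rw [pow_zero, pow_zero]; exact le_sup_right
  | k + 1 => by
    rw [pow_succ, pow_succ]
    exact (mul_le_mul_left (sup_pow_le a b k) _).trans (sup_mul_sup_le a _ b)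

theorem sup_pow_mul_le (x y : α) (k l : ℕ) : (x ⊔ y) ^ (k * l) ≤ x ^ k ⊔ y ^ l := by
  have hk : (x ⊔ y) ^ k ≤ x ^ k ⊔ y := by
    rw [sup_comm x y, sup_comm (x ^ k) y]
    exact sup_pow_le y x k
  calc (x ⊔ y) ^ (k * l) = ((x ⊔ y) ^ k) ^ l := pow_mul _ _ _
    _ ≤ (x ^ k ⊔ y) ^ l := pow_le_pow_left' hk l
    _ ≤ x ^ k ⊔ y ^ l := sup_pow_le _ _ l

end ResiduatedLattice

open ResiduatedLattice

namespace IsFilter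

variable {F : Set α}

theorem mem_of_le (hF : IsFilter F) {x y : α} (hx : x ∈ F) (hxy : x ≤ y) : y ∈ F :=
  hF.2.2 x hx y hxy

theorem mul_mem (hF : IsFilter F) {x y : α} (hx : x ∈ F) (hy : y ∈ F) : x * y ∈ F :=
  hF.2.1 x hx y hy

theorem one_mem (hF : IsFilter F) : (1 : α) ∈ F :=
  let ⟨x, hx⟩ := hF.1
  hF.mem_of_le hx (le_one x)

def toSubmonoid (hF : IsFilter F) : Submonoid α where
  carrier := F
  mul_mem' := hF.mul_mem
  one_mem' := hF.one_mem

end IsFilter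

namespace IsPrimeFilter

variable {P : Set α}

theorem mem_or_mem (hP : IsPrimeFilter P) {x y : α} (h : x ⊔ y ∈ P) : x ∈ P ∨ y ∈ P :=
  hP.2.2 x y h

theorem bot_notMem (hP : IsPrimeFilter P) : (⊥ : α) ∉ P := fun h =>
  hP.2.1 (Set.eq_univ_of_forall fun _ => hP.1.mem_of_le h bot_le)

theorem sup_notMem (hP : IsPrimeFilter P) {x y : α} (hx : x ∉ P) (hy : y ∉ P) : x ⊔ y ∉ P :=
  fun h => (hP.mem_or_mem h).elim hx hy

theorem finset_sup_notMem (hP : IsPrimeFilter P) {ι : Type*} {s : Finset ι} {f : ι → α}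
    (h : ∀ i ∈ s, f i ∉ P) : s.sup f ∉ P :=
  Finset.sup_induction (p := (· ∉ P)) hP.bot_notMem (fun _ h₁ _ h₂ => hP.sup_notMem h₁ h₂) h

end IsPrimeFilter

theorem isFilter_sUnion_of_isChain {c : Set (Set α)} (hc : ∀ G ∈ c, IsFilter G)
    (hchain : IsChain (· ⊆ ·) c) (hne : c.Nonempty) : IsFilter (⋃₀ c) := by
  obtain ⟨G, hG⟩ := hne
  refine ⟨(hc G hG).1.mono (Set.subset_sUnion_of_mem hG), ?_, ?_⟩
  · rintro x ⟨G₁, hG₁, hx⟩ y ⟨G₂, hG₂, hy⟩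
    rcases hchain.total hG₁ hG₂ with h | h
    · exact ⟨G₂, hG₂, (hc G₂ hG₂).mul_mem (h hx) hy⟩
    · exact ⟨G₁, hG₁, (hc G₁ hG₁).mul_mem hx (h hy)⟩
  · rintro x ⟨G₁, hG₁, hx⟩ y hxy
    exact ⟨G₁, hG₁, (hc G₁ hG₁).mem_of_le hx hxy⟩

/-- The filter generated by `Q ∪ {z}` when `Q` is a filter. -/
def adjoinFilter (Q : Set α) (z : α) : Set α := {w | ∃ q ∈ Q, ∃ k : ℕ, q * z ^ k ≤ w}

theorem subset_adjoinFilter (Q : Set α) (z : α) : Q ⊆ adjoinFilter Q z :=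
  fun q hq => ⟨q, hq, 0, by rw [pow_zero, mul_one]⟩

theorem mem_adjoinFilter {Q : Set α} (hQ : IsFilter Q) (z : α) : z ∈ adjoinFilter Q z :=
  ⟨1, hQ.one_mem, 1, by rw [pow_one, one_mul]⟩

theorem isFilter_adjoinFilter {Q : Set α} (hQ : IsFilter Q) (z : α) :
    IsFilter (adjoinFilter Q z) := by
  refine ⟨⟨z, mem_adjoinFilter hQ z⟩, ?_, ?_⟩
  · rintro w₁ ⟨q₁, hq₁, k₁, h₁⟩ w₂ ⟨q₂, hq₂, k₂, h₂⟩
    refine ⟨q₁ * q₂, hQ.mul_mem hq₁ hq₂, k₁ + k₂, ?_⟩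
    calc q₁ * q₂ * z ^ (k₁ + k₂) = q₁ * z ^ k₁ * (q₂ * z ^ k₂) := by rw [pow_add]; ac_rfl
      _ ≤ w₁ * w₂ := mul_le_mul' h₁ h₂
  · rintro w ⟨q, hq, k, h⟩ w' hw
    exact ⟨q, hq, k, h.trans hw⟩

theorem isPrimeFilter_of_maximal {F C : Set α} (hC : IsJoinClosed C) {Q : Set α}
    (hQ : Maximal (fun G => IsFilter G ∧ F ⊆ G ∧ Disjoint G C) Q) : IsPrimeFilter Q := by
  obtain ⟨⟨hQ, hFQ, hQC⟩, hmax⟩ := hQ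
  have hmeet : ∀ z ∉ Q, ∃ q ∈ Q, ∃ k : ℕ, ∃ c ∈ C, q * z ^ k ≤ c := by
    intro z hz
    have : ¬ Disjoint (adjoinFilter Q z) C := fun hd =>
      hz (hmax ⟨isFilter_adjoinFilter hQ z, hFQ.trans (subset_adjoinFilter Q z), hd⟩
        (subset_adjoinFilter Q z) (mem_adjoinFilter hQ z))
    obtain ⟨c, ⟨q, hq, k, hle⟩, hc⟩ := Set.not_disjoint_iff.1 this
    exact ⟨q, hq, k, c, hc, hle⟩
  refine ⟨hQ, fun h => ?_, fun x y hxy => ?_⟩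
  · obtain ⟨c, hc⟩ := hC.1
    exact Set.disjoint_left.1 hQC (h ▸ Set.mem_univ c) hc
  · by_contra! ⟨hx, hy⟩
    obtain ⟨q₁, hq₁, k, c₁, hc₁, h₁⟩ := hmeet x hx
    obtain ⟨q₂, hq₂, l, c₂, hc₂, h₂⟩ := hmeet y hy
    have hmem : q₁ * q₂ * (x ⊔ y) ^ (k * l) ∈ Q :=
      hQ.mul_mem (hQ.mul_mem hq₁ hq₂) (hQ.toSubmonoid.pow_mem hxy _)
    have hle : q₁ * q₂ * (x ⊔ y) ^ (k * l) ≤ c₁ ⊔ c₂ :=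
      calc q₁ * q₂ * (x ⊔ y) ^ (k * l) ≤ q₁ * q₂ * (x ^ k ⊔ y ^ l) :=
            mul_le_mul_right (sup_pow_mul_le x y k l) _
        _ = q₁ * x ^ k * q₂ ⊔ q₂ * y ^ l * q₁ := by
            rw [ResiduatedLattice.mul_sup]; congr 1 <;> ac_rfl
        _ ≤ c₁ ⊔ c₂ := sup_le_sup ((mul_le_left _ _).trans h₁) ((mul_le_left _ _).trans h₂)
    exact Set.disjoint_left.1 hQC (hQ.mem_of_le hmem hle) (hC.2 _ hc₁ _ hc₂)

theorem exists_isPrimeFilter_disjoint {F C : Set α} (hF : IsFilter F) (hC : IsJoinClosed C)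
    (hFC : Disjoint F C) : ∃ Q, IsPrimeFilter Q ∧ F ⊆ Q ∧ Disjoint Q C := by
  obtain ⟨Q, -, hQ⟩ := zorn_subset_nonempty {G | IsFilter G ∧ F ⊆ G ∧ Disjoint G C}
    (fun c hcS hchain hne =>
      ⟨⋃₀ c, ⟨isFilter_sUnion_of_isChain (fun G hG => (hcS hG).1) hchain hne,
        let ⟨G, hG⟩ := hne; (hcS hG).2.1.trans (Set.subset_sUnion_of_mem hG),
        Set.disjoint_sUnion_left.2 fun G hG => (hcS hG).2.2⟩,
        fun _ => Set.subset_sUnion_of_mem⟩)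
    F ⟨hF, subset_rfl, hFC⟩
  exact ⟨Q, isPrimeFilter_of_maximal hC hQ, hQ.prop.2.1, hQ.prop.2.2⟩

theorem IsFilter.mem_of_forall_isPrimeFilter {F : Set α} (hF : IsFilter F) {x : α}
    (hx : ∀ P, IsPrimeFilter P → F ⊆ P → x ∈ P) : x ∈ F := by
  by_contra hxF
  obtain ⟨Q, hQ, hFQ, hQx⟩ := exists_isPrimeFilter_disjoint (C := Set.Iic x) hF
    ⟨⟨x, le_rfl⟩, fun _ h₁ _ h₂ => sup_le h₁ h₂⟩
    (Set.disjoint_left.2 fun y hy hyx => hxF (hF.mem_of_le hy hyx))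
  exact Set.disjoint_left.1 hQx (hx Q hQ hFQ) le_rfl

namespace IsMinPrimeOver

variable {F P Q : Set α}

theorem exists_sup_mem (hF : IsFilter F) (hP : IsMinPrimeOver F P) {t : α} (ht : t ∈ P) :
    ∃ r ∉ P, t ⊔ r ∈ F := by
  by_contra! h
  obtain ⟨hPp, hFP, hmin⟩ := hP
  obtain ⟨y₀, hy₀⟩ := (Set.ne_univ_iff_exists_notMem P).1 hPp.2.1
  let C : Set α := {c | ∃ y ∉ P, c ≤ t ⊔ y}
  have hC : IsJoinClosed C := by
    refine ⟨⟨t, y₀, hy₀, le_sup_left⟩, ?_⟩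
    rintro c₁ ⟨y₁, hy₁, h₁⟩ c₂ ⟨y₂, hy₂, h₂⟩
    exact ⟨y₁ ⊔ y₂, hPp.sup_notMem hy₁ hy₂, sup_le
      (h₁.trans (sup_le_sup_left le_sup_left t)) (h₂.trans (sup_le_sup_left le_sup_right t))⟩
  have hFC : Disjoint F C := Set.disjoint_left.2 fun c hc ⟨y, hy, hcy⟩ =>
    h y hy (hF.mem_of_le hc hcy)
  obtain ⟨Q, hQ, hFQ, hQC⟩ := exists_isPrimeFilter_disjoint hF hC hFC
  have hQP : Q ⊆ P := fun q hq => by_contra fun hqP =>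
    Set.disjoint_left.1 hQC hq ⟨q, hqP, le_sup_right⟩
  exact Set.disjoint_left.1 hQC (hmin Q hQ hFQ hQP ▸ ht) ⟨y₀, hy₀, le_sup_left⟩

theorem exists_sup_mem_of_ne (hF : IsFilter F) (hP : IsMinPrimeOver F P)
    (hQ : IsMinPrimeOver F Q) (hPQ : P ≠ Q) : ∃ p ∉ P, ∃ q ∉ Q, p ⊔ q ∈ F := by
  obtain ⟨u, huP, huQ⟩ : ∃ u ∈ P, u ∉ Q :=
    Set.not_subset.1 fun h => hPQ (hQ.2.2 P hP.1 hP.2.1 h)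
  obtain ⟨r, hrP, hur⟩ := hP.exists_sup_mem hF huP
  exact ⟨r, hrP, u, huQ, sup_comm u r ▸ hur⟩

end IsMinPrimeOver

section Families

variable {ι : Type*} [Fintype ι] [DecidableEq ι] {F : Set α}

theorem exists_pairwise_sup_mem_of_injective (hF : IsFilter F) {m : ι → Set α}
    (hm : ∀ i, IsMinPrimeOver F (m i)) (hinj : Function.Injective m) :
    ∃ a : ι → α, (∀ i j, i ≠ j → a i ⊔ a j ∈ F) ∧ ∀ i, a i ∉ m i := by
  have hsep : ∀ i j, ∃ p q : α, i ≠ j → p ∉ m i ∧ q ∉ m j ∧ p ⊔ q ∈ F := by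
    intro i j
    by_cases hij : i = j
    · exact ⟨1, 1, fun h => absurd hij h⟩
    · obtain ⟨p, hp, q, hq, hpq⟩ := (hm i).exists_sup_mem_of_ne hF (hm j) (hinj.ne hij)
      exact ⟨p, q, fun _ => ⟨hp, hq, hpq⟩⟩
  choose p q hpq using hsep
  have hle : ∀ i j, i ≠ j → p i j ⊔ q j i ≤ (univ.erase i).sup fun k => p i k ⊔ q k i :=
    fun i j hij => le_sup (f := fun k => p i k ⊔ q k i) (mem_erase.2 ⟨hij.symm, mem_univ j⟩)
  refine ⟨fun i => (univ.erase i).sup fun k => p i k ⊔ q k i, fun i j hij => ?_, fun i => ?_⟩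
  · refine hF.mem_of_le (hpq i j hij).2.2 (sup_le_sup ?_ ?_)
    · exact le_sup_left.trans (hle i j hij)
    · exact le_sup_right.trans (hle j i hij.symm)
  · refine (hm i).1.finset_sup_notMem fun k hk => ?_
    have hki := ne_of_mem_erase hk
    exact (hm i).1.sup_notMem (hpq i k hki.symm).1 (hpq k i hki).2.1

variable {a : ι → α}

theorem prod_erase_mem_of_notMem {P : Set α} (hP : IsPrimeFilter P) (hFP : F ⊆ P)
    (hpair : ∀ i j, i ≠ j → a i ⊔ a j ∈ F) {i : ι} (hi : a i ∉ P) :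
    ∏ j ∈ univ.erase i, a j ∈ P :=
  hP.1.toSubmonoid.prod_mem fun j hj =>
    (hP.mem_or_mem (hFP (hpair i j (ne_of_mem_erase hj).symm))).resolve_left hi

theorem sup_prod_erase_mem [Nonempty ι] (hF : IsFilter F)
    (hpair : ∀ i j, i ≠ j → a i ⊔ a j ∈ F) :
    univ.sup (fun i => ∏ j ∈ univ.erase i, a j) ∈ F := by
  refine hF.mem_of_forall_isPrimeFilter fun P hP hFP => ?_
  obtain ⟨i, hi⟩ : ∃ i, ∏ j ∈ univ.erase i, a j ∈ P := by
    by_cases h : ∃ i, a i ∉ P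
    · obtain ⟨i, hi⟩ := h
      exact ⟨i, prod_erase_mem_of_notMem hP hFP hpair hi⟩
    · push Not at h
      obtain ⟨i⟩ := ‹Nonempty ι›
      exact ⟨i, hP.1.toSubmonoid.prod_mem fun j _ => h j⟩
  exact hP.1.mem_of_le hi (le_sup (f := fun i => ∏ j ∈ univ.erase i, a j) (mem_univ i))

theorem coann_sup_prod_erase_subset {P : Set α} (hP : IsPrimeFilter P) (hFP : F ⊆ P) {i : ι}
    (hi : a i ∉ P) : coann F ((univ.erase i).sup fun k => ∏ j ∈ univ.erase k, a j) ⊆ P := by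
  refine fun c hc => (hP.mem_or_mem (hFP hc)).resolve_left (hP.finset_sup_notMem fun k hk => ?_)
  exact fun hk' => hi (hP.1.mem_of_le hk'
    (prod_le_of_mem (mem_erase.2 ⟨(ne_of_mem_erase hk).symm, mem_univ i⟩)))

end Families

/-- Lemma 4.4: given `n ≥ 2` pairwise distinct `F`-minimal prime filters
`m i`, there are `a i` pairwise in `F` with `a i ∉ m i`; and with `b i = ⊙_{j ≠ i} a j`:
each `b i ∈ m i`, the join of all the `b i` lies in `F`, and
`(F : ⋁_{j ≠ i} b j) ⊆ m i` for each `i`. -/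
theorem stmt_16 (F : Set α) (hF : IsFilter F) (n : ℕ) (hn : 2 ≤ n)
    (m : Fin n → Set α) (hm : ∀ i, IsMinPrimeOver F (m i)) (hinj : Function.Injective m) :
    ∃ a : Fin n → α,
      (∀ i j, i ≠ j → a i ⊔ a j ∈ F) ∧
      (∀ i, a i ∉ m i) ∧
      (∀ i, (∏ j ∈ Finset.univ.erase i, a j) ∈ m i) ∧
      (Finset.univ.sup (fun i => ∏ j ∈ Finset.univ.erase i, a j) ∈ F) ∧
      (∀ i, coann F
          ((Finset.univ.erase i).sup (fun k => ∏ j ∈ Finset.univ.erase k, a j)) ⊆ m i) := by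
  obtain ⟨a, hpair, hout⟩ := exists_pairwise_sup_mem_of_injective hF hm hinj
  have : Nonempty (Fin n) := ⟨⟨0, by omega⟩⟩
  exact ⟨a, hpair, hout, fun i => prod_erase_mem_of_notMem (hm i).1 (hm i).2.1 hpair (hout i),
    sup_prod_erase_mem hF hpair, fun i => coann_sup_prod_erase_subset (hm i).1 (hm i).2.1 (hout i)⟩
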